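/- Let f(y) = y + y²/2, let c₀ ∈ ℝ, and let u : ℝ → ℝ be bounded and continuous with u(a) = u(b) = c₀ for some a < b. Assume that f(u(x)) ≤ f(c₀) for every x ∈ [a,b], that f(u(x)) ≥ f(c₀) for every x ∉ [a,b], and that ∫_ℝ K(b−y)·(f(u(y)) − f(c₀)) dy ≤ ∫_ℝ K(a−y)·(f(u(y)) − f(c₀)) dy. Then u(x) = c₀ for every x ∈ ℝ. -/
import Mathlib


open MeasureTheory Real

/-- The kernel `K(x) = -sgn(x) e^{-|x|}/2`, the derivative of the Green's function
`G₂(x) = e^{-|x|}/2` of `1 - d²/dx²` on `ℝ`. -/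
noncomputable def bbmK (x : ℝ) : ℝ := -Real.sign x * Real.exp (-|x|) / 2

lemma measurable_realSign : Measurable Real.sign := by
  unfold Real.sign
  exact Measurable.ite (measurableSet_lt measurable_id measurable_const) measurable_const
    (Measurable.ite (measurableSet_lt measurable_const measurable_id) measurable_const
      measurable_const)

lemma measurable_bbmK : Measurable bbmK := by
  unfold bbmK
  exact ((measurable_realSign.neg.mul
    ((measurable_id.abs.neg).exp)).div_const 2)

lemma bbmK_of_pos {x : ℝ} (hx : 0 < x) : bbmK x = -(Real.exp (-x)) / 2 := by
  rw [bbmK, Real.sign_of_pos hx, abs_of_pos hx]; ring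

lemma bbmK_of_neg {x : ℝ} (hx : x < 0) : bbmK x = Real.exp x / 2 := by
  rw [bbmK, Real.sign_of_neg hx, abs_of_neg hx, neg_neg]; ring

@[simp] lemma bbmK_zero : bbmK 0 = 0 := by simp [bbmK]

lemma abs_bbmK_le (x : ℝ) : |bbmK x| ≤ Real.exp (-|x|) / 2 := by
  rw [bbmK, abs_div, abs_mul, abs_neg]
  have h1 : |Real.sign x| ≤ 1 := by
    rcases Real.sign_apply_eq x with h | h | h <;> simp [h]
  have h2 : |Real.exp (-|x|)| = Real.exp (-|x|) := abs_of_pos (Real.exp_pos _)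
  have : |Real.sign x| * |Real.exp (-|x|)| ≤ 1 * Real.exp (-|x|) := by
    rw [h2]; exact mul_le_mul_of_nonneg_right h1 (Real.exp_pos _).le
  simp only [abs_two]
  nlinarith [Real.exp_pos (-|x|)]

lemma integrable_exp_neg_abs : Integrable (fun x : ℝ => Real.exp (-|x|)) := by
  have h1 : IntegrableOn (fun x : ℝ => Real.exp (-|x|)) (Set.Ioi 0) := by
    refine (exp_neg_integrableOn_Ioi 0 one_pos).congr_fun ?_ measurableSet_Ioi
    intro x hx
    simp [abs_of_pos (Set.mem_Ioi.mp hx)]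
  have h2 : IntegrableOn (fun x : ℝ => Real.exp (-|x|)) (Set.Iic 0) := by
    refine (integrableOn_exp_Iic 0).congr_fun ?_ measurableSet_Iic
    intro x hx
    simp [abs_of_nonpos (Set.mem_Iic.mp hx)]
  have : IntegrableOn (fun x : ℝ => Real.exp (-|x|)) (Set.Iic 0 ∪ Set.Ioi 0) := h2.union h1
  rw [Set.Iic_union_Ioi] at this
  exact integrableOn_univ.mp this

/-- General unique continuation at a time slice, first sign configuration, with
`f(y) = y + y²/2`: if `u(a) = u(b) = c₀`, `f(u) ≤ f(c₀)` on `[a,b]`, `f(u) ≥ f(c₀)` outside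
`[a,b]`, and `∫ K(b-y)(f(u)-f(c₀)) dy ≤ ∫ K(a-y)(f(u)-f(c₀)) dy`, then `u ≡ c₀`. -/
theorem bbm_unique_continuation_general_first (c₀ : ℝ) (u : ℝ → ℝ)
    (hbdd : ∃ C : ℝ, ∀ x, |u x| ≤ C) (hcont : Continuous u)
    (a b : ℝ) (hab : a < b) (hua : u a = c₀) (hub : u b = c₀)
    (hin : ∀ x ∈ Set.Icc a b, u x + u x ^ 2 / 2 ≤ c₀ + c₀ ^ 2 / 2)
    (hout : ∀ x ∉ Set.Icc a b, c₀ + c₀ ^ 2 / 2 ≤ u x + u x ^ 2 / 2)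
    (hineq : (∫ y : ℝ, bbmK (b - y) * ((u y + u y ^ 2 / 2) - (c₀ + c₀ ^ 2 / 2))) ≤
      ∫ y : ℝ, bbmK (a - y) * ((u y + u y ^ 2 / 2) - (c₀ + c₀ ^ 2 / 2))) :
    ∀ x : ℝ, u x = c₀ := by
  obtain ⟨C, hC⟩ := hbdd
  set g : ℝ → ℝ := fun y => (u y + u y ^ 2 / 2) - (c₀ + c₀ ^ 2 / 2) with hg_def
  have hgcont : Continuous g := by
    apply Continuous.sub
    · exact hcont.add ((hcont.pow 2).div_const 2)
    · exact continuous_const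
  have hgbd : ∀ y, |g y| ≤ C + C ^ 2 / 2 + (|c₀| + c₀ ^ 2 / 2) := by
    intro y
    have h1 := hC y
    have h2 : |u y| ^ 2 = u y ^ 2 := sq_abs (u y)
    have h3 : |c₀| ^ 2 = c₀ ^ 2 := sq_abs c₀
    have habs := abs_nonneg (u y)
    have habs2 := abs_nonneg c₀
    rw [hg_def]
    rw [abs_le]
    constructor <;> nlinarith [abs_le.mp (le_refl |u y|), neg_abs_le (u y), le_abs_self (u y),
      neg_abs_le c₀, le_abs_self c₀, sq_nonneg (|u y| - |c₀|)]
  set M : ℝ := C + C ^ 2 / 2 + (|c₀| + c₀ ^ 2 / 2) with hM_def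
  -- integrability of each integrand
  have key_int : ∀ c : ℝ, Integrable (fun y => bbmK (c - y) * g y) := by
    intro c
    have hmeas : AEStronglyMeasurable (fun y => bbmK (c - y) * g y) volume :=
      ((measurable_bbmK.comp (measurable_const.sub measurable_id)).mul
        hgcont.measurable).aestronglyMeasurable
    have hbound : Integrable (fun y : ℝ => Real.exp (-|c - y|) / 2 * M) := by
      have : Integrable (fun y : ℝ => Real.exp (-|c - y|)) := by
        have := (integrable_exp_neg_abs.comp_sub_left c)
        simpa using this
      exact (this.div_const 2).mul_const M
    refine hbound.mono' hmeas ?_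
    filter_upwards with y
    rw [Real.norm_eq_abs, abs_mul]
    have h1 := abs_bbmK_le (c - y)
    have h2 := hgbd y
    have h3 := abs_nonneg (g y)
    exact mul_le_mul h1 h2 h3 (by positivity)
  -- the difference kernel
  set h : ℝ → ℝ := fun y => bbmK (b - y) - bbmK (a - y) with hh_def
  have hkey : ∀ y, h y ≠ 0 ∧ 0 ≤ h y * g y := by
    intro y
    have hga : g a = 0 := by simp [hg_def, hua]
    have hgb : g b = 0 := by simp [hg_def, hub]
    rcases lt_trichotomy y a with hya | hya | hya
    · -- y < a : h > 0, g ≥ 0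
      have hb' : 0 < b - y := by linarith
      have ha' : 0 < a - y := by linarith
      have hhy : h y = (Real.exp (-(a - y)) - Real.exp (-(b - y))) / 2 := by
        rw [hh_def]; simp only; rw [bbmK_of_pos hb', bbmK_of_pos ha']; ring
      have hpos : 0 < h y := by
        rw [hhy]
        have : Real.exp (-(b - y)) < Real.exp (-(a - y)) := Real.exp_lt_exp.mpr (by linarith)
        linarith
      have hgy : 0 ≤ g y := by
        have := hout y (by simp [Set.mem_Icc]; intro h'; linarith)
        rw [hg_def]; linarith
      exact ⟨hpos.ne', mul_nonneg hpos.le hgy⟩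
    · -- y = a
      subst hya
      have hb' : 0 < b - y := by linarith
      constructor
      · rw [hh_def]; simp only [sub_self, bbmK_zero, sub_zero]
        rw [bbmK_of_pos hb']
        have := Real.exp_pos (-(b - y))
        intro hcontra
        nlinarith
      · rw [hga, mul_zero]
    · rcases lt_trichotomy y b with hyb | hyb | hyb
      · -- a < y < b : h < 0, g ≤ 0
        have hb' : 0 < b - y := by linarith
        have ha' : a - y < 0 := by linarith
        have hhy : h y = (-Real.exp (-(b - y)) - Real.exp (a - y)) / 2 := by
          rw [hh_def]; simp only; rw [bbmK_of_pos hb', bbmK_of_neg ha']; ring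
        have hneg : h y < 0 := by
          rw [hhy]
          have := Real.exp_pos (-(b - y))
          have := Real.exp_pos (a - y)
          linarith
        have hgy : g y ≤ 0 := by
          have := hin y (by constructor <;> linarith)
          rw [hg_def]; linarith
        exact ⟨hneg.ne, by nlinarith⟩
      · -- y = b
        subst hyb
        have ha' : a - y < 0 := by linarith
        constructor
        · rw [hh_def]; simp only [sub_self, bbmK_zero, zero_sub, neg_ne_zero]
          rw [bbmK_of_neg ha']
          have := Real.exp_pos (a - y)
          positivity
        · rw [hgb, mul_zero]
      · -- y > b : h > 0, g ≥ 0
        have hb' : b - y < 0 := by linarith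
        have ha' : a - y < 0 := by linarith
        have hhy : h y = (Real.exp (b - y) - Real.exp (a - y)) / 2 := by
          rw [hh_def]; simp only; rw [bbmK_of_neg hb', bbmK_of_neg ha']; ring
        have hpos : 0 < h y := by
          rw [hhy]
          have : Real.exp (a - y) < Real.exp (b - y) := Real.exp_lt_exp.mpr (by linarith)
          linarith
        have hgy : 0 ≤ g y := by
          have := hout y (by simp [Set.mem_Icc]; intro h'; linarith)
          rw [hg_def]; linarith
        exact ⟨hpos.ne', mul_nonneg hpos.le hgy⟩
  -- the integral of h * g is zero
  have hint : Integrable (fun y => h y * g y) := by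
    have := (key_int b).sub (key_int a)
    refine this.congr ?_
    filter_upwards with y
    simp only [Pi.sub_apply, hh_def]
    ring
  have hle : (∫ y, h y * g y) ≤ 0 := by
    have heq : (∫ y, h y * g y) =
        (∫ y, bbmK (b - y) * g y) - ∫ y, bbmK (a - y) * g y := by
      rw [← integral_sub (key_int b) (key_int a)]
      congr 1; funext y; rw [hh_def]; ring
    rw [heq]
    exact sub_nonpos.mpr hineq
  have hzero : (∫ y, h y * g y) = 0 :=
    le_antisymm hle (integral_nonneg fun y => (hkey y).2)
  have hae : (fun y => h y * g y) =ᵐ[volume] 0 := by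
    rw [← integral_eq_zero_iff_of_nonneg (fun y => (hkey y).2) hint]
    exact hzero
  have hgae : g =ᵐ[volume] 0 := by
    filter_upwards [hae] with y hy
    rcases mul_eq_zero.mp hy with h' | h'
    · exact absurd h' (hkey y).1
    · exact h'
  have hgzero : g = 0 := (hgcont.ae_eq_iff_eq volume continuous_zero).mp hgae
  -- now u x solves the quadratic for every x
  have hq : ∀ x, (u x - c₀) * (u x + c₀ + 2) = 0 := by
    intro x
    have := congrFun hgzero x
    simp only [hg_def, Pi.zero_apply] at this
    linear_combination 2 * this
  intro x
  by_contra hux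
  have hd : u x = -2 - c₀ := by
    rcases mul_eq_zero.mp (hq x) with h' | h'
    · exact absurd (by linarith [h'] : u x = c₀) hux
    · linarith
  -- intermediate value: u takes the value -1 somewhere
  have hmid : (-1 : ℝ) ∈ Set.uIcc (u a) (u x) := by
    rw [hua, hd, Set.mem_uIcc]
    rcases le_total c₀ (-1) with h' | h' <;> [left; right] <;> constructor <;> linarith
  obtain ⟨z, _, hz⟩ := intermediate_value_uIcc (hcont.continuousOn) hmid
  have := hq z
  rw [hz] at this
  have h9 : (c₀ + 1) ^ 2 = 0 := by linear_combination -this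
  have h10 := (pow_eq_zero_iff two_ne_zero).mp h9
  have hc : c₀ = -1 := by linarith
  rw [hc] at hd hux
  exact hux (by rw [hd]; norm_num)
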